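/- arXiv:0903.0581 — 2 statements merged into one kernel-verified Lean document; each statement's English description precedes it below -/
import Mathlib

section
/- Let R be a commutative ring, let y be an element and X a nonempty finite set not containing y, and let S be any function assigning to each nonempty finite subset of {y} ∪ X an element of R. For a nonempty finite set T, define the cumulant 𝔄(T) = Σ_P (−1)^{|P|−1} (|P|−1)! ∏_{B∈P} S(B), where the sum runs over all partitions P of T into nonempty pairwise disjoint blocks B. Then 𝔄({y} ∪ X) = Σ_{∅≠Z⊆X} ( S({y} ∪ Z) − S({y})·S(Z) ) · Σ_Q (−1)^{|Q|} |Q|! ∏_{B∈Q} S(B), where the inner sum runs over all partitions Q of X \ Z into nonempty pairwise disjoint blocks (with the convention that when Z = X the inner sum equals 1, the value for the empty partition). -/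
open Finset

/-!
Split a partition of `{y} ∪ X` at the block `{y} ∪ Z` containing `y`: this writes the cumulant as
`∑_{Z ⊆ X} S({y} ∪ Z) · g(X \ Z)`, where `g(U) = ∑_Q (−1)^{|Q|} |Q|! ∏_{B ∈ Q} S(B)`, because the
weight `(−1)^{|P|−1} (|P|−1)!` of `P` is the weight of `g` evaluated at the remaining partition `Q`.
The term `Z = ∅` is `S({y}) · g(X)`, and marking one block of a partition of `X` instead gives
`g(X) = −∑_{∅ ≠ Z ⊆ X} S(Z) · g(X \ Z)`, since `|P| · (−1)^{|P|−1} (|P|−1)! = −(−1)^{|P|} |P|!`.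
-/

/-- The finset of all partitions of a finite set `T` into nonempty pairwise
disjoint blocks, represented as finsets of blocks. -/
def partitionsOf {α : Type*} [DecidableEq α] (T : Finset α) : Finset (Finset (Finset α)) :=
  T.powerset.powerset.filter
    (fun P => (∀ B ∈ P, B ≠ ∅) ∧ (∀ B ∈ P, ∀ B' ∈ P, B ≠ B' → ∀ a ∈ B, a ∉ B') ∧
      P.sup id = T)

/-- The cumulant `𝔄(T) = Σ_P (−1)^{|P|−1} (|P|−1)! ∏_{B∈P} S(B)` of a set function `S`,
the sum running over all partitions `P` of `T` into nonempty pairwise disjoint blocks. -/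
noncomputable def cumulant {α R : Type*} [DecidableEq α] [CommRing R]
    (S : Finset α → R) (T : Finset α) : R :=
  ∑ P ∈ partitionsOf T, (-1 : R) ^ (P.card - 1) * (Nat.factorial (P.card - 1) : R) * ∏ B ∈ P, S B

section Partitions

variable {α : Type*} [DecidableEq α] {T U Z B B' : Finset α} {P Q : Finset (Finset α)}

theorem mem_partitionsOf :
    P ∈ partitionsOf T ↔ (∀ B ∈ P, B ≠ ∅) ∧
      (∀ B ∈ P, ∀ B' ∈ P, B ≠ B' → ∀ a ∈ B, a ∉ B') ∧ P.sup id = T := by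
  refine ⟨fun h => (mem_filter.1 h).2, fun h => mem_filter.2 ⟨?_, h⟩⟩
  exact mem_powerset.2 fun B hB => mem_powerset.2 (h.2.2 ▸ le_sup (f := id) hB)

theorem subset_of_mem_partitionsOf (hP : P ∈ partitionsOf T) (hB : B ∈ P) : B ⊆ T :=
  (mem_partitionsOf.1 hP).2.2 ▸ le_sup (f := id) hB

theorem exists_mem_block_of_mem_partitionsOf (hP : P ∈ partitionsOf T) {a : α} (ha : a ∈ T) :
    ∃ B ∈ P, a ∈ B := by
  rw [← (mem_partitionsOf.1 hP).2.2] at ha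
  simpa using mem_sup.1 ha

theorem eq_of_mem_partitionsOf (hP : P ∈ partitionsOf T) (hB : B ∈ P) (hB' : B' ∈ P) {a : α}
    (ha : a ∈ B) (ha' : a ∈ B') : B = B' := by
  by_contra hne
  exact (mem_partitionsOf.1 hP).2.1 B hB B' hB' hne a ha ha'

theorem nonempty_of_mem_partitionsOf (hT : T.Nonempty) (hP : P ∈ partitionsOf T) :
    P.Nonempty := by
  obtain ⟨a, ha⟩ := hT
  obtain ⟨B, hB, -⟩ := exists_mem_block_of_mem_partitionsOf hP ha
  exact ⟨B, hB⟩

theorem notMem_partitionsOf_of_disjoint (hZ : Z.Nonempty) (hd : Disjoint Z U)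
    (hQ : Q ∈ partitionsOf U) : Z ∉ Q := fun hZQ =>
  hZ.ne_empty (disjoint_self.1 (hd.mono_right (subset_of_mem_partitionsOf hQ hZQ)))

theorem insert_mem_partitionsOf (hZ : Z.Nonempty) (hd : Disjoint Z U)
    (hQ : Q ∈ partitionsOf U) : insert Z Q ∈ partitionsOf (Z ∪ U) := by
  obtain ⟨hne, hdisj, hsup⟩ := mem_partitionsOf.1 hQ
  have hZB : ∀ B ∈ Q, ∀ a ∈ Z, a ∉ B := fun B hB a haZ haB =>
    disjoint_left.1 hd haZ (subset_of_mem_partitionsOf hQ hB haB)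
  refine mem_partitionsOf.2 ⟨?_, ?_, by rw [sup_insert, hsup]; rfl⟩
  · intro B hB
    rcases mem_insert.1 hB with rfl | hBQ
    exacts [hZ.ne_empty, hne B hBQ]
  · intro B hB B' hB' hBB' a ha ha'
    rcases mem_insert.1 hB with rfl | hBQ <;> rcases mem_insert.1 hB' with rfl | hB'Q
    exacts [hBB' rfl, hZB B' hB'Q a ha ha', hZB B hBQ a ha' ha, hdisj B hBQ B' hB'Q hBB' a ha ha']

theorem erase_mem_partitionsOf (hP : P ∈ partitionsOf T) (hB : B ∈ P) :
    P.erase B ∈ partitionsOf (T \ B) := by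
  obtain ⟨hne, hdisj, -⟩ := mem_partitionsOf.1 hP
  refine mem_partitionsOf.2 ⟨fun B' hB' => hne B' (mem_of_mem_erase hB'),
    fun B₁ h₁ B₂ h₂ => hdisj B₁ (mem_of_mem_erase h₁) B₂ (mem_of_mem_erase h₂), ?_⟩
  ext a
  simp only [mem_sup, id_eq, mem_sdiff, mem_erase]
  constructor
  · rintro ⟨B', ⟨hB'B, hB'⟩, ha⟩
    exact ⟨subset_of_mem_partitionsOf hP hB' ha,
      fun haB => hB'B (eq_of_mem_partitionsOf hP hB' hB ha haB)⟩
  · rintro ⟨haT, haB⟩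
    obtain ⟨B', hB', ha⟩ := exists_mem_block_of_mem_partitionsOf hP haT
    exact ⟨B', ⟨fun h => haB (h ▸ ha), hB'⟩, ha⟩

theorem sum_partitionsOf_sum_erase {M : Type*} [AddCommMonoid M]
    (T : Finset α) (F : Finset α → Finset (Finset α) → M) :
    ∑ P ∈ partitionsOf T, ∑ B ∈ P, F B (P.erase B) =
      ∑ Z ∈ T.powerset.filter (fun Z => Z ≠ ∅), ∑ Q ∈ partitionsOf (T \ Z), F Z Q := by
  rw [sum_sigma', sum_sigma']
  have hinsert : ∀ p ∈ (T.powerset.filter (fun Z => Z ≠ ∅)).sigma (fun Z => partitionsOf (T \ Z)),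
      insert p.1 p.2 ∈ partitionsOf T ∧ p.1 ∉ p.2 := by
    rintro ⟨Z, Q⟩ hp
    simp only [mem_sigma, mem_filter, mem_powerset, ← nonempty_iff_ne_empty] at hp
    obtain ⟨⟨hZT, hZ⟩, hQ⟩ := hp
    have hd : Disjoint Z (T \ Z) := disjoint_sdiff
    have h := insert_mem_partitionsOf hZ hd hQ
    rw [union_sdiff_of_subset hZT] at h
    exact ⟨h, notMem_partitionsOf_of_disjoint hZ hd hQ⟩
  refine sum_nbij' (fun p => ⟨p.2, p.1.erase p.2⟩) (fun p => ⟨insert p.1 p.2, p.1⟩)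
    ?_ ?_ ?_ ?_ (fun _ _ => rfl)
  · rintro ⟨P, B⟩ hp
    simp only [mem_sigma] at hp
    simp only [mem_sigma, mem_filter, mem_powerset]
    exact ⟨⟨subset_of_mem_partitionsOf hp.1 hp.2, (mem_partitionsOf.1 hp.1).1 B hp.2⟩,
      erase_mem_partitionsOf hp.1 hp.2⟩
  · exact fun p hp => mem_sigma.2 ⟨(hinsert p hp).1, mem_insert_self _ _⟩
  · rintro ⟨P, B⟩ hp
    simp only [mem_sigma] at hp
    simp only [insert_erase hp.2]
  · exact fun p hp => by simp only [erase_insert (hinsert p hp).2]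

theorem sum_ite_mem_partitionsOf {M : Type*} [AddCommMonoid M] (hP : P ∈ partitionsOf T)
    (hB : B ∈ P) {a : α} (ha : a ∈ B) (g : Finset α → M) :
    ∑ B' ∈ P, (if a ∈ B' then g B' else 0) = g B := by
  rw [sum_eq_single_of_mem B hB fun B' hB' hne => if_neg fun ha' =>
    hne (eq_of_mem_partitionsOf hP hB' hB ha' ha), if_pos ha]

end Partitions

section PartitionSum

variable {α R : Type*} [DecidableEq α] [CommSemiring R]

def partitionSum (w : ℕ → R) (f : Finset α → R) (T : Finset α) : R :=
  ∑ P ∈ partitionsOf T, w P.card * ∏ B ∈ P, f B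

theorem mul_weight_mul_prod_erase (w : ℕ → R) (f : Finset α → R) {P : Finset (Finset α)}
    {B : Finset α} (hB : B ∈ P) :
    f B * (w ((P.erase B).card + 1) * ∏ B' ∈ P.erase B, f B') = w P.card * ∏ B' ∈ P, f B' := by
  rw [card_erase_add_one hB, ← mul_prod_erase P f hB]
  ring

theorem partitionSum_congr_of_nonempty {w w' : ℕ → R} (f : Finset α → R) {T : Finset α}
    (hT : T.Nonempty) (h : ∀ n, 0 < n → w n = w' n) : partitionSum w f T = partitionSum w' f T :=
  sum_congr rfl fun P hP => by
    rw [h _ (card_pos.2 (nonempty_of_mem_partitionsOf hT hP))]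

theorem partitionSum_card_mul (w : ℕ → R) (f : Finset α → R) (T : Finset α) :
    partitionSum (fun n => n * w n) f T =
      ∑ Z ∈ T.powerset.filter (fun Z => Z ≠ ∅),
        f Z * partitionSum (fun n => w (n + 1)) f (T \ Z) := by
  have hmarked : ∀ P ∈ partitionsOf T, (P.card : R) * w P.card * ∏ B ∈ P, f B =
      ∑ B ∈ P, f B * (w ((P.erase B).card + 1) * ∏ B' ∈ P.erase B, f B') := by
    intro P _
    rw [sum_congr rfl fun B hB => mul_weight_mul_prod_erase w f hB, sum_const, nsmul_eq_mul,
      mul_assoc]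
  simp only [partitionSum, mul_sum]
  rw [sum_congr rfl hmarked]
  exact sum_partitionsOf_sum_erase T fun B Q => f B * (w (Q.card + 1) * ∏ B' ∈ Q, f B')

theorem partitionSum_insert (w : ℕ → R) (f : Finset α → R) {y : α} {T : Finset α}
    (hy : y ∉ T) :
    partitionSum w f (insert y T) =
      ∑ Z ∈ T.powerset, f (insert y Z) * partitionSum (fun n => w (n + 1)) f (T \ Z) := by
  let F : Finset α → Finset (Finset α) → R := fun B Q =>
    if y ∈ B then f B * (w (Q.card + 1) * ∏ B' ∈ Q, f B') else 0
  calc partitionSum w f (insert y T)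
      = ∑ P ∈ partitionsOf (insert y T), ∑ B ∈ P, F B (P.erase B) := by
        refine sum_congr rfl fun P hP => ?_
        obtain ⟨B, hB, hyB⟩ := exists_mem_block_of_mem_partitionsOf hP (mem_insert_self y T)
        rw [sum_ite_mem_partitionsOf hP hB hyB, mul_weight_mul_prod_erase w f hB]
    _ = ∑ Z ∈ (insert y T).powerset.filter (fun Z => Z ≠ ∅),
          if y ∈ Z then f Z * partitionSum (fun n => w (n + 1)) f (insert y T \ Z) else 0 := by
        rw [sum_partitionsOf_sum_erase]
        refine sum_congr rfl fun Z _ => ?_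
        by_cases hyZ : y ∈ Z <;> simp only [F, partitionSum, mul_sum, hyZ, if_true, if_false,
          sum_const_zero]
    _ = ∑ Z ∈ T.powerset, f (insert y Z) * partitionSum (fun n => w (n + 1)) f (T \ Z) := by
        rw [sum_filter_of_ne fun Z _ hZ => ne_empty_of_mem (of_not_not fun hyZ => hZ (if_neg hyZ)),
          sum_powerset_insert hy]
        have hyZ : ∀ Z ∈ T.powerset, y ∉ Z := fun Z hZ hyZ => hy (mem_powerset.1 hZ hyZ)
        rw [sum_congr rfl fun Z hZ => if_neg (hyZ Z hZ), sum_const_zero, zero_add]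
        refine sum_congr rfl fun Z hZ => ?_
        rw [if_pos (mem_insert_self y Z), insert_sdiff_insert, sdiff_insert_of_notMem hy]

end PartitionSum

/-- Lemma 1 of the paper (abstract form): the cumulant of `{y} ∪ X` is expressed through
second-order cumulants `S({y} ∪ Z) − S({y})·S(Z)` over nonempty subsets `Z ⊆ X`. -/
theorem cumulant_insert_eq_sum_second_order {α R : Type*} [DecidableEq α] [CommRing R]
    (y : α) (X : Finset α) (hX : X.Nonempty) (hy : y ∉ X) (S : Finset α → R) :
    cumulant S (insert y X) =
      ∑ Z ∈ X.powerset.filter (fun Z => Z ≠ ∅),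
        (S (insert y Z) - S {y} * S Z) *
          ∑ Q ∈ partitionsOf (X \ Z),
            (-1 : R) ^ Q.card * (Nat.factorial Q.card : R) * ∏ B ∈ Q, S B := by
  let w : ℕ → R := fun n => (-1) ^ (n - 1) * ((n - 1).factorial : R)
  let c : ℕ → R := fun n => (-1) ^ n * (n.factorial : R)
  have hwc : (fun n => w (n + 1)) = c := by simp [w, c]
  have hX_sum : partitionSum c S X =
      -∑ Z ∈ X.powerset.filter (fun Z => Z ≠ ∅), S Z * partitionSum c S (X \ Z) := by
    calc partitionSum c S X = partitionSum (fun n => -(n * w n)) S X := by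
          refine partitionSum_congr_of_nonempty S hX fun n hn => ?_
          obtain ⟨m, rfl⟩ := Nat.exists_eq_add_of_lt hn
          simp only [w, c, Nat.add_sub_cancel, pow_succ, Nat.factorial_succ, Nat.cast_mul,
            Nat.cast_succ]
          ring
      _ = -partitionSum (fun n => n * w n) S X := by
          simp only [partitionSum, neg_mul, sum_neg_distrib]
      _ = _ := by rw [partitionSum_card_mul, hwc]
  change partitionSum w S (insert y X) = ∑ Z ∈ X.powerset.filter (fun Z => Z ≠ ∅),
    (S (insert y Z) - S {y} * S Z) * partitionSum c S (X \ Z)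
  rw [partitionSum_insert w S hy, hwc, ← add_sum_erase _ _ (empty_mem_powerset X), ← filter_ne',
    insert_empty_eq, sdiff_empty, hX_sum, mul_neg, mul_sum]
  simp only [sub_mul, sum_sub_distrib, mul_assoc]
  ring
end

section
/- Let β′, β″ > 0 with β = β′ + β″, let C, C₁, C₂ > 0 and t ≥ 0 be real numbers, set C̃₁ = max(C₁, 1) and C̃₂ = max(C₂, 2/β′), and let s be a natural number. Then Σ_{n=0}^{s} (2^n / n!) · C^{s−n} · ∫_{ℝ^s} ( C + (C₁ + C₂ t)·s + t·Σ_{i=1}^{s} p_i² )^n · exp( −β Σ_{i=1}^{s} p_i²/2 ) dp₁…dp_s ≤ e^C · e^s · (2π/β″)^{s/2} · C^s · Σ_{n=0}^{s} (2/C)^n · (C̃₁ + C̃₂ t)^n. -/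
/-!
Write `P = Σ pᵢ²` and split `e^{-βP/2} = e^{-β′P/2} e^{-β″P/2}`. The first factor absorbs the
polynomial: by the binomial theorem and `x^m e^{-cx} ≤ m!/c^m`,
`(A + tP)^n e^{-β′P/2} ≤ n! Σ_k A^k/k! (2t/β′)^{n-k} ≤ n! D^n e^{A/D}` as soon as `2t/β′ ≤ D`;
with `D = C̃₁ + C̃₂t ≥ 1` and `A = C + (C₁+C₂t)s` one has `A/D ≤ C + s`. The second factor
integrates to `(2π/β″)^{s/2}`, and the `n!` cancels the `1/n!` of the prefactor.
-/

open MeasureTheory Finset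
open scoped Nat

lemma pow_mul_exp_neg_mul_le {c x : ℝ} (hc : 0 < c) (hx : 0 ≤ x) (m : ℕ) :
    x ^ m * Real.exp (-(c * x)) ≤ m ! / c ^ m := by
  have h := Real.pow_div_factorial_le_exp (c * x) (by positivity) m
  rw [div_le_iff₀ (by positivity)] at h
  rw [le_div_iff₀ (by positivity), Real.exp_neg]
  calc x ^ m * (Real.exp (c * x))⁻¹ * c ^ m = (c * x) ^ m * (Real.exp (c * x))⁻¹ := by ring
    _ ≤ Real.exp (c * x) * m ! * (Real.exp (c * x))⁻¹ := by gcongr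
    _ = m ! := by field_simp

lemma add_mul_pow_mul_exp_neg_le {a b c x : ℝ} (ha : 0 ≤ a) (hb : 0 ≤ b) (hc : 0 < c)
    (hx : 0 ≤ x) (n : ℕ) :
    (a + b * x) ^ n * Real.exp (-(c * x)) ≤
      n ! * ∑ k ∈ range (n + 1), a ^ k / k ! * (b / c) ^ (n - k) := by
  rw [add_pow, sum_mul, mul_sum]
  refine sum_le_sum fun k hk => ?_
  have hkn : k ≤ n := Nat.lt_succ_iff.mp (mem_range.mp hk)
  have hchoose : (n.choose k : ℝ) * k ! * (n - k)! = n ! := by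
    exact_mod_cast Nat.choose_mul_factorial_mul_factorial hkn
  calc a ^ k * (b * x) ^ (n - k) * (n.choose k : ℝ) * Real.exp (-(c * x))
      = (n.choose k : ℝ) * a ^ k * b ^ (n - k) * (x ^ (n - k) * Real.exp (-(c * x))) := by
        ring
    _ ≤ (n.choose k : ℝ) * a ^ k * b ^ (n - k) * ((n - k)! / c ^ (n - k)) := by
        gcongr; exact pow_mul_exp_neg_mul_le hc hx _
    _ = n ! * (a ^ k / k ! * (b / c) ^ (n - k)) := by
        rw [← hchoose, div_pow]; field_simp

lemma sum_pow_div_factorial_mul_pow_le_exp {a e d : ℝ} (ha : 0 ≤ a) (he : 0 ≤ e) (hed : e ≤ d)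
    (hd : 0 < d) (n : ℕ) :
    ∑ k ∈ range (n + 1), a ^ k / k ! * e ^ (n - k) ≤ d ^ n * Real.exp (a / d) :=
  calc ∑ k ∈ range (n + 1), a ^ k / k ! * e ^ (n - k)
      ≤ ∑ k ∈ range (n + 1), d ^ n * ((a / d) ^ k / k !) := by
        refine sum_le_sum fun k hk => ?_
        have hkn : k ≤ n := Nat.lt_succ_iff.mp (mem_range.mp hk)
        calc a ^ k / k ! * e ^ (n - k) ≤ a ^ k / k ! * d ^ (n - k) := by gcongr
          _ = d ^ n * ((a / d) ^ k / k !) := by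
            rw [div_pow, pow_sub₀ d hd.ne' hkn]; field_simp
    _ = d ^ n * ∑ k ∈ range (n + 1), (a / d) ^ k / k ! := (mul_sum _ _ _).symm
    _ ≤ d ^ n * Real.exp (a / d) := by
        gcongr; exact Real.sum_le_exp_of_nonneg (by positivity) _

lemma integrable_exp_neg_mul_sum_sq {ι : Type*} [Fintype ι] {b : ℝ} (hb : 0 < b) :
    Integrable (fun p : ι → ℝ => Real.exp (-b * ∑ i, p i ^ 2)) := by
  simp_rw [mul_sum, Real.exp_sum]
  exact Integrable.fintype_prod fun _ => integrable_exp_neg_mul_sq hb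

lemma integral_exp_neg_mul_sum_sq {ι : Type*} [Fintype ι] {b : ℝ} (hb : 0 < b) :
    ∫ p : ι → ℝ, Real.exp (-b * ∑ i, p i ^ 2) = (Real.pi / b) ^ (Fintype.card ι / 2 : ℝ) := by
  simp_rw [mul_sum, Real.exp_sum]
  rw [volume_pi, integral_fintype_prod_eq_pow (fun x : ℝ => Real.exp (-b * x ^ 2)),
    integral_gaussian, Real.sqrt_eq_rpow, ← Real.rpow_natCast, ← Real.rpow_mul (by positivity)]
  ring_nf

lemma integral_mul_exp_neg_mul_sum_sq_le {ι : Type*} [Fintype ι] {f : ℝ → ℝ} {a b M : ℝ}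
    (hb : 0 < b) (hf : ∀ x, 0 ≤ x → 0 ≤ f x)
    (hfM : ∀ x, 0 ≤ x → f x * Real.exp (-(a * x)) ≤ M) :
    ∫ p : ι → ℝ, f (∑ i, p i ^ 2) * Real.exp (-(a + b) * ∑ i, p i ^ 2) ≤
      M * (Real.pi / b) ^ (Fintype.card ι / 2 : ℝ) := by
  rw [← integral_exp_neg_mul_sum_sq hb, ← integral_const_mul]
  refine integral_mono_of_nonneg (.of_forall fun p => ?_)
    ((integrable_exp_neg_mul_sum_sq hb).const_mul M) (.of_forall fun p => ?_)
  · have hx : 0 ≤ ∑ i, p i ^ 2 := by positivity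
    exact mul_nonneg (hf _ hx) (Real.exp_nonneg _)
  · have hx : 0 ≤ ∑ i, p i ^ 2 := by positivity
    calc f (∑ i, p i ^ 2) * Real.exp (-(a + b) * ∑ i, p i ^ 2)
        = f (∑ i, p i ^ 2) * Real.exp (-(a * ∑ i, p i ^ 2)) *
            Real.exp (-b * ∑ i, p i ^ 2) := by
          rw [mul_assoc, ← Real.exp_add]; ring_nf
      _ ≤ M * Real.exp (-b * ∑ i, p i ^ 2) := by gcongr; exact hfM _ hx

lemma add_mul_pow_mul_exp_neg_le_pow_mul_exp {a b c d x : ℝ} (ha : 0 ≤ a) (hb : 0 ≤ b)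
    (hc : 0 < c) (hbcd : b / c ≤ d) (hd : 0 < d) (hx : 0 ≤ x) (n : ℕ) :
    (a + b * x) ^ n * Real.exp (-(c * x)) ≤ n ! * (d ^ n * Real.exp (a / d)) :=
  (add_mul_pow_mul_exp_neg_le ha hb hc hx n).trans <| by
    gcongr; exact sum_pow_div_factorial_mul_pow_le_exp ha (by positivity) hbcd hd n

lemma integral_add_mul_sum_sq_pow_mul_gaussian_le {ι : Type*} [Fintype ι]
    {A t D β β' β'' : ℝ} (hA : 0 ≤ A) (ht : 0 ≤ t) (hD : 0 < D) (hβ' : 0 < β') (hβ'' : 0 < β'')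
    (hβ : β = β' + β'') (htD : 2 / β' * t ≤ D) (n : ℕ) :
    ∫ p : ι → ℝ, (A + t * ∑ i, p i ^ 2) ^ n * Real.exp (-β * ∑ i, p i ^ 2 / 2) ≤
      n ! * (D ^ n * Real.exp (A / D)) * (2 * Real.pi / β'') ^ (Fintype.card ι / 2 : ℝ) := by
  have key := integral_mul_exp_neg_mul_sum_sq_le (ι := ι) (f := fun x => (A + t * x) ^ n)
    (a := β' / 2) (half_pos hβ'') (fun x hx => by positivity) fun x hx =>
      add_mul_pow_mul_exp_neg_le_pow_mul_exp hA ht (half_pos hβ')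
        (by convert htD using 1; ring) hD hx n
  rw [div_div_eq_mul_div, mul_comm Real.pi] at key
  convert key using 4 with p
  rw [← sum_div, hβ]; ring_nf

/-- The analytic heart of the proof of Proposition 1 of the paper (passage from (3.4) to
(3.13)): with `C̃₁ = max(C₁,1)`, `C̃₂ = max(C₂, 2/β′)` and `β = β′ + β″`,
`Σ_{n=0}^{s} (2^n/n!) C^{s−n} ∫_{ℝ^s} (C + (C₁+C₂t)s + tΣp_i²)^n e^{−βΣp_i²/2} dp
  ≤ e^C e^s (2π/β″)^{s/2} C^s Σ_{n=0}^{s} (2/C)^n (C̃₁+C̃₂t)^n`. -/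
theorem interaction_region_momentum_estimate (β β' β'' C C₁ C₂ t : ℝ)
    (hβ' : 0 < β') (hβ'' : 0 < β'') (hβ : β = β' + β'')
    (hC : 0 < C) (hC₁ : 0 < C₁) (hC₂ : 0 < C₂) (ht : 0 ≤ t) (s : ℕ) :
    ∑ n ∈ Finset.range (s + 1),
        ((2 : ℝ) ^ n / (Nat.factorial n : ℝ)) * C ^ (s - n) *
          ∫ p : Fin s → ℝ,
            (C + (C₁ + C₂ * t) * (s : ℝ) + t * ∑ i, p i ^ 2) ^ n *
              Real.exp (-β * ∑ i, p i ^ 2 / 2) ≤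
      Real.exp C * Real.exp (s : ℝ) * (2 * Real.pi / β'') ^ ((s : ℝ) / 2) * C ^ s *
        ∑ n ∈ Finset.range (s + 1),
          (2 / C) ^ n * (max C₁ 1 + max C₂ (2 / β') * t) ^ n := by
  set D := max C₁ 1 + max C₂ (2 / β') * t
  set A := C + (C₁ + C₂ * t) * (s : ℝ)
  have hD : 1 ≤ D := by
    have := le_max_right C₁ 1
    have := mul_nonneg ((div_pos two_pos hβ').le.trans (le_max_right C₂ _)) ht
    linarith
  have htD : 2 / β' * t ≤ D := by
    have := mul_le_mul_of_nonneg_right (le_max_right C₂ (2 / β')) ht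
    have := zero_le_one.trans (le_max_right C₁ 1)
    linarith
  have hAD : A / D ≤ C + s := by
    rw [div_le_iff₀ (by positivity)]
    have := mul_le_mul_of_nonneg_right (le_max_left C₂ (2 / β')) ht
    have := le_max_left C₁ 1
    nlinarith
  calc _ ≤ ∑ n ∈ range (s + 1), (2 : ℝ) ^ n / n ! * C ^ (s - n) *
          (n ! * (D ^ n * Real.exp (C + s)) * (2 * Real.pi / β'') ^ ((s : ℝ) / 2)) := by
        gcongr with n
        have h := integral_add_mul_sum_sq_pow_mul_gaussian_le (ι := Fin s) (A := A)
          (by positivity) ht (by positivity) hβ' hβ'' hβ htD n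
        rw [Fintype.card_fin] at h
        exact h.trans (by gcongr)
    _ = _ := by
        rw [mul_sum]
        refine sum_congr rfl fun n hn => ?_
        rw [pow_sub₀ C hC.ne' (Nat.lt_succ_iff.mp (mem_range.mp hn)), Real.exp_add, div_pow]
        field_simp
end
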